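/- Let (X, ε, δ) be random with values in ℝ^d × ℝ × {0,1}^d such that: ε is independent of X with E[ε] = 0 and E[ε²] < ∞; δ has independent coordinates δ_j ~ Bernoulli(p_j) with p_j ∈ (0,1] and is independent of (X, ε); and E[‖X‖²] < ∞. Let y = Xᵀβ* + ε for a fixed β* ∈ ℝ^d, P = diag(p_1,…,p_d), X̃ = X ⊙ δ, and g̃(β*) = P⁻¹ X̃ (X̃ᵀ P⁻¹ β* − y) − (I − P) P⁻² diag(X̃ X̃ᵀ) β*. If β* minimizes the risk R(β) = ½ E[(Xᵀβ − y)²], then E[g̃(β*)] = 0. -/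

import Mathlib

/-!
Under the linear model the `i`-th coordinate of the debiased gradient at `β*` is
`∑ⱼ β*ⱼ XᵢXⱼ cᵢⱼ(δ) - Xᵢ ε δᵢ / pᵢ` with the mask coefficients
`cᵢⱼ(δ) = δᵢδⱼ / (pᵢpⱼ) - δᵢ / pᵢ - [j = i] (1 - pᵢ) δᵢ / pᵢ²`.
As the mask is independent of `(X, ε)`, the means of the terms factor as
`β*ⱼ E[XᵢXⱼ] E[cᵢⱼ(δ)]` and `E[Xᵢε] E[δᵢ / pᵢ]`. The debiasing makes `E[cᵢⱼ(δ)] = 0`: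
for `j ≠ i` because `E[δᵢδⱼ] = pᵢpⱼ`, and for `j = i` already pointwise since `δᵢ² = δᵢ`.
Finally `E[Xᵢε] = 0` because the noise is centred and independent of `X`.
-/

open MeasureTheory ProbabilityTheory Finset

noncomputable section

section Mask

variable {ι : Type*} [Fintype ι] [DecidableEq ι]

def maskWeight (p : ι → ℝ) (η : ι → Bool) : ℝ := ∏ j, if η j then p j else 1 - p j

omit [DecidableEq ι] in
lemma maskWeight_nonneg {p : ι → ℝ} (hp0 : ∀ j, 0 ≤ p j) (hp1 : ∀ j, p j ≤ 1)
    (η : ι → Bool) : 0 ≤ maskWeight p η :=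
  prod_nonneg fun j _ => by split_ifs <;> linarith [hp0 j, hp1 j]

lemma sum_maskWeight_mul_prod (p : ι → ℝ) (s : Finset ι) :
    ∑ η, maskWeight p η * ∏ k ∈ s, (if η k then (1 : ℝ) else 0) = ∏ k ∈ s, p k := by
  have hfactor : ∀ η : ι → Bool, maskWeight p η * ∏ k ∈ s, (if η k then (1 : ℝ) else 0) =
      ∏ k, (if η k then p k else 1 - p k) * (if k ∈ s then (if η k then 1 else 0) else 1) := by
    intro η
    rw [maskWeight, prod_mul_distrib, prod_ite_mem, univ_inter]
  have hcoord : ∀ k, ∑ b : Bool, (if b then p k else 1 - p k) *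
      (if k ∈ s then (if b then (1 : ℝ) else 0) else 1) = if k ∈ s then p k else 1 := by
    intro k
    by_cases hk : k ∈ s <;> simp [hk]
  simp only [hfactor]
  rw [← Fintype.prod_sum fun k (b : Bool) =>
      (if b then p k else 1 - p k) * (if k ∈ s then (if b then (1 : ℝ) else 0) else 1),
    prod_congr rfl fun k _ => hcoord k, prod_ite_mem, univ_inter]

lemma integral_comp_eq_sum_maskWeight {Ω : Type*} [MeasurableSpace Ω] {μ : Measure Ω}
    [IsFiniteMeasure μ] {δ : Ω → ι → Bool} (hδ : Measurable δ) {p : ι → ℝ}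
    (hp0 : ∀ j, 0 ≤ p j) (hp1 : ∀ j, p j ≤ 1)
    (hlaw : ∀ η, μ {ω | δ ω = η} = ENNReal.ofReal (maskWeight p η)) (h : (ι → Bool) → ℝ) :
    ∫ ω, h (δ ω) ∂μ = ∑ η, maskWeight p η * h η := by
  rw [← integral_map hδ.aemeasurable (measurable_of_countable h).aestronglyMeasurable,
    integral_fintype .of_finite]
  refine sum_congr rfl fun η _ => ?_
  rw [measureReal_def, Measure.map_apply hδ (measurableSet_singleton η),
    show δ ⁻¹' {η} = {ω | δ ω = η} from rfl, hlaw η,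
    ENNReal.toReal_ofReal (maskWeight_nonneg hp0 hp1 η), smul_eq_mul]

def debiasCoeff (p : ι → ℝ) (i j : ι) (η : ι → Bool) : ℝ :=
  (if η i then 1 else 0) * (if η j then 1 else 0) / (p i * p j) - (if η i then 1 else 0) / p i -
    if j = i then (1 - p i) / p i ^ 2 * (if η i then 1 else 0) else 0

omit [Fintype ι] in
lemma debiasCoeff_self (p : ι → ℝ) (i : ι) (η : ι → Bool) : debiasCoeff p i i η = 0 := by
  rw [debiasCoeff, if_pos rfl]
  split_ifs
  · field_simp
    ring
  · simp

lemma sum_maskWeight_mul_debiasCoeff {p : ι → ℝ} (hp : ∀ j, p j ≠ 0) (i j : ι) :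
    ∑ η, maskWeight p η * debiasCoeff p i j η = 0 := by
  rcases eq_or_ne j i with rfl | hji
  · simp [debiasCoeff_self]
  have hpair : ∀ η : ι → Bool, debiasCoeff p i j η =
      (∏ k ∈ {i, j}, if η k then (1 : ℝ) else 0) / (p i * p j) -
        (∏ k ∈ {i}, if η k then (1 : ℝ) else 0) / p i := by
    intro η
    rw [debiasCoeff, if_neg hji, sub_zero, prod_pair hji.symm, prod_singleton]
  simp only [hpair, mul_sub, mul_div_assoc', sum_sub_distrib, ← sum_div]
  rw [sum_maskWeight_mul_prod, sum_maskWeight_mul_prod, prod_pair hji.symm, prod_singleton,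
    div_self (mul_ne_zero (hp i) (hp j)), div_self (hp i), sub_self]

lemma integral_debiasCoeff_comp_eq_zero {Ω : Type*} [MeasurableSpace Ω] {μ : Measure Ω}
    [IsFiniteMeasure μ] {δ : Ω → ι → Bool} (hδ : Measurable δ) {p : ι → ℝ}
    (hp : ∀ j, 0 < p j ∧ p j ≤ 1)
    (hlaw : ∀ η, μ {ω | δ ω = η} = ENNReal.ofReal (maskWeight p η)) (i j : ι) :
    ∫ ω, debiasCoeff p i j (δ ω) ∂μ = 0 := by
  rw [integral_comp_eq_sum_maskWeight hδ (fun j => (hp j).1.le) (fun j => (hp j).2) hlaw,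
    sum_maskWeight_mul_debiasCoeff (fun j => (hp j).1.ne')]

end Mask

lemma memLp_two_apply_of_integrable_sq_norm {Ω ι : Type*} [MeasurableSpace Ω] {μ : Measure Ω}
    [Fintype ι] {X : Ω → EuclideanSpace ℝ ι} (hX : AEStronglyMeasurable X μ)
    (hX2 : Integrable (fun ω => ‖X ω‖ ^ 2) μ) (j : ι) : MemLp (fun ω => X ω j) 2 μ :=
  ((memLp_two_iff_integrable_sq_norm hX).2 hX2).of_le
    ((EuclideanSpace.proj j).continuous.comp_aestronglyMeasurable hX)
    (ae_of_all _ fun ω => PiLp.norm_apply_le (X ω) j)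

section Factorization

variable {Ω E κ : Type*} [MeasurableSpace Ω] {μ : Measure Ω} [MeasurableSpace E]
  [MeasurableSpace κ] [Countable κ] [MeasurableSingletonClass κ] {Z : Ω → E} {δ : Ω → κ}

lemma integrable_comp_of_finite [Finite κ] [IsFiniteMeasure μ] (hδ : Measurable δ) (h : κ → ℝ) :
    Integrable (fun ω => h (δ ω)) μ :=
  (integrable_map_measure (measurable_of_countable h).aestronglyMeasurable hδ.aemeasurable).mp
    .of_finite

lemma ProbabilityTheory.IndepFun.integrable_comp_mul_comp [Finite κ] [IsFiniteMeasure μ]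
    (hZδ : IndepFun Z δ μ) (hδ : Measurable δ) {f : E → ℝ} (hf : Measurable f)
    (hfZ : Integrable (fun ω => f (Z ω)) μ) (h : κ → ℝ) :
    Integrable (fun ω => f (Z ω) * h (δ ω)) μ :=
  (hZδ.comp hf (measurable_of_countable h)).integrable_mul hfZ (integrable_comp_of_finite hδ h)

lemma ProbabilityTheory.IndepFun.integral_comp_mul_comp' (hZδ : IndepFun Z δ μ)
    (hZ : Measurable Z) (hδ : Measurable δ) {f : E → ℝ} (hf : Measurable f) (h : κ → ℝ) :
    ∫ ω, f (Z ω) * h (δ ω) ∂μ = (∫ ω, f (Z ω) ∂μ) * ∫ ω, h (δ ω) ∂μ :=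
  hZδ.integral_comp_mul_comp hZ.aemeasurable hδ.aemeasurable hf.aestronglyMeasurable
    (measurable_of_countable h).aestronglyMeasurable

end Factorization

section Gradient

variable {ι : Type*} [Fintype ι] [DecidableEq ι]

def debiasedGradient (p β x : ι → ℝ) (y : ℝ) (η : ι → Bool) : ι → ℝ :=
  ((∑ j, (x j * (if η j then 1 else 0)) * ((p j)⁻¹ * β j)) - y) •
      (Matrix.diagonal fun j => (p j)⁻¹).mulVec (fun j => x j * (if η j then 1 else 0)) -
    ((1 - Matrix.diagonal p) * (Matrix.diagonal fun j => (p j)⁻¹) *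
        (Matrix.diagonal fun j => (p j)⁻¹) *
        (Matrix.diagonal fun j => (x j * (if η j then 1 else 0)) ^ 2)).mulVec β

lemma debiasedGradient_apply_linear_model (p β x : ι → ℝ) (e : ℝ) (η : ι → Bool) (i : ι) :
    debiasedGradient p β x (∑ j, x j * β j + e) η i =
      ∑ j, β j * (x i * x j) * debiasCoeff p i j η - x i * e * ((if η i then 1 else 0) / p i) := by
  simp only [debiasedGradient, Pi.sub_apply, Pi.smul_apply, smul_eq_mul, ← Matrix.diagonal_one,
    Matrix.diagonal_sub, Matrix.diagonal_mul_diagonal, Matrix.mulVec_diagonal, debiasCoeff]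
  by_cases hη : η i
  · simp only [hη, if_true, mul_sub, sub_mul, add_mul, sum_sub_distrib, sum_mul, mul_ite, mul_zero,
      ite_mul, zero_mul, sum_ite_eq', mem_univ, mul_one, mul_div_assoc']
    have hmasked : ∑ j, (if η j then x j * ((p j)⁻¹ * β j) * ((p i)⁻¹ * x i) else 0) =
        ∑ j, (if η j then β j * (x i * x j) else 0) / (p i * p j) :=
      sum_congr rfl fun j _ => by split_ifs <;> ring
    have hfull : ∑ j, x j * β j * ((p i)⁻¹ * x i) = ∑ j, β j * (x i * x j) / p i :=
      sum_congr rfl fun j _ => by ring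
    rw [hmasked, hfull]
    ring
  · simp [hη]

end Gradient

end

theorem stmt_2_general (d : ℕ)
    {Ω : Type*} [MeasurableSpace Ω] (μ : Measure Ω) [IsProbabilityMeasure μ]
    (X : Ω → EuclideanSpace ℝ (Fin d)) (ε : Ω → ℝ) (δ : Ω → Fin d → Bool)
    (hXm : ∀ j, Measurable fun ω => X ω j) (hεm : Measurable ε) (hδm : Measurable δ)
    (hεX : IndepFun X ε μ)
    (hε0 : ∫ ω, ε ω ∂μ = 0)
    (hε2 : Integrable (fun ω => (ε ω) ^ 2) μ)
    (p : Fin d → ℝ) (hp : ∀ j, 0 < p j ∧ p j ≤ 1)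
    (hδlaw : ∀ η : Fin d → Bool,
      μ {ω | δ ω = η} = ENNReal.ofReal (∏ j, if η j then p j else 1 - p j))
    (hδindep : IndepFun (fun ω => (X ω, ε ω)) δ μ)
    (hX2 : Integrable (fun ω => ‖X ω‖ ^ 2) μ)
    (βs : EuclideanSpace ℝ (Fin d))
    (y : Ω → ℝ) (hy : ∀ ω, y ω = (∑ j, X ω j * βs j) + ε ω)
    (g : Ω → Fin d → ℝ)
    (hg : ∀ ω, g ω =
      ((∑ j, (X ω j * (if δ ω j then 1 else 0)) * ((p j)⁻¹ * βs j)) - y ω) •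
          (Matrix.diagonal fun j => (p j)⁻¹).mulVec (fun j => X ω j * (if δ ω j then 1 else 0)) -
        ((1 - Matrix.diagonal p) * (Matrix.diagonal fun j => (p j)⁻¹) *
            (Matrix.diagonal fun j => (p j)⁻¹) *
            (Matrix.diagonal fun j => (X ω j * (if δ ω j then 1 else 0)) ^ 2)).mulVec
          (fun j => βs j)) :
    ∀ i, ∫ ω, g ω i ∂μ = 0 := by
  intro i
  have hX : Measurable X := (WithLp.measurable_toLp 2 _).comp (measurable_pi_iff.mpr hXm)
  have hZ : Measurable fun ω => (X ω, ε ω) := hX.prodMk hεm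
  have hXL2 := memLp_two_apply_of_integrable_sq_norm hX.aestronglyMeasurable hX2
  have hεL2 : MemLp ε 2 μ := (memLp_two_iff_integrable_sq hεm.aestronglyMeasurable).2 hε2
  have hXε : ∫ ω, X ω i * ε ω ∂μ = 0 :=
    ((hεX.comp ((measurable_pi_apply i).comp (WithLp.measurable_ofLp 2 _)) measurable_id)
      |>.integral_fun_mul_eq_mul_integral (hXm i).aestronglyMeasurable
        hεm.aestronglyMeasurable).trans (by simp [Function.comp_def, hε0])
  have hpoint : ∀ ω, g ω i = ∑ j, βs j * (X ω i * X ω j) * debiasCoeff p i j (δ ω) -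
      X ω i * ε ω * ((if δ ω i then 1 else 0) / p i) := fun ω => by
    rw [hg ω, hy ω]
    exact debiasedGradient_apply_linear_model p (βs ·) (X ω ·) (ε ω) (δ ω) i
  have hfXX : ∀ j, Measurable fun q : EuclideanSpace ℝ (Fin d) × ℝ => βs j * (q.1 i * q.1 j) := by
    fun_prop
  have hfXε : Measurable fun q : EuclideanSpace ℝ (Fin d) × ℝ => q.1 i * q.2 := by fun_prop
  have hint₁ : ∀ j, Integrable (fun ω => βs j * (X ω i * X ω j) * debiasCoeff p i j (δ ω)) μ :=
    fun j => hδindep.integrable_comp_mul_comp hδm (hfXX j)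
      (((hXL2 i).integrable_mul (hXL2 j)).const_mul _) _
  have hint₂ : Integrable (fun ω => X ω i * ε ω * ((if δ ω i then 1 else 0) / p i)) μ :=
    hδindep.integrable_comp_mul_comp hδm hfXε ((hXL2 i).integrable_mul hεL2)
      fun η => (if η i then 1 else 0) / p i
  have hval₁ : ∀ j, ∫ ω, βs j * (X ω i * X ω j) * debiasCoeff p i j (δ ω) ∂μ = 0 := fun j =>
    (hδindep.integral_comp_mul_comp' hZ hδm (hfXX j) (debiasCoeff p i j)).trans
      (by rw [integral_debiasCoeff_comp_eq_zero hδm hp hδlaw, mul_zero])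
  have hval₂ : ∫ ω, X ω i * ε ω * ((if δ ω i then 1 else 0) / p i) ∂μ = 0 :=
    (hδindep.integral_comp_mul_comp' hZ hδm hfXε fun η => (if η i then 1 else 0) / p i).trans
      (by rw [hXε, zero_mul])
  rw [integral_congr_ae (ae_of_all _ hpoint),
    integral_sub (integrable_finsetSum _ fun j _ => hint₁ j) hint₂,
    integral_finsetSum _ fun j _ => hint₁ j]
  simp [hval₁, hval₂]

/-- Let `(X, ε, δ)` be random with `ε ⟂ X`, `E[ε] = 0`, `E[ε²] < ∞`,
`δ` an independent-coordinates Bernoulli mask (parameters `p_j ∈ (0,1]`) independent of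
`(X, ε)`, and `E[‖X‖²] < ∞`.  With `y = Xᵀβ* + ε`, `P = diag(p)`, `X̃ = X ⊙ δ`, and
`g̃(β*) = P⁻¹ X̃ (X̃ᵀ P⁻¹ β* − y) − (I − P) P⁻² diag(X̃ X̃ᵀ) β*`, if `β*` minimizes the
risk `R(β) = ½ E[(Xᵀβ − y)²]` then `E[g̃(β*)] = 0`. -/
theorem stmt_2 (d : ℕ) (hd : 1 ≤ d)
    {Ω : Type*} [MeasurableSpace Ω] (μ : Measure Ω) [IsProbabilityMeasure μ]
    (X : Ω → EuclideanSpace ℝ (Fin d)) (ε : Ω → ℝ) (δ : Ω → Fin d → Bool)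
    (hXm : ∀ j, Measurable fun ω => X ω j) (hεm : Measurable ε) (hδm : Measurable δ)
    (hεX : IndepFun X ε μ)
    (hε0 : ∫ ω, ε ω ∂μ = 0)
    (hε2 : Integrable (fun ω => (ε ω) ^ 2) μ)
    (p : Fin d → ℝ) (hp : ∀ j, 0 < p j ∧ p j ≤ 1)
    (hδlaw : ∀ η : Fin d → Bool,
      μ {ω | δ ω = η} = ENNReal.ofReal (∏ j, if η j then p j else 1 - p j))
    (hδindep : IndepFun (fun ω => (X ω, ε ω)) δ μ)
    (hX2 : Integrable (fun ω => ‖X ω‖ ^ 2) μ)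
    (βs : EuclideanSpace ℝ (Fin d))
    (y : Ω → ℝ) (hy : ∀ ω, y ω = (∑ j, X ω j * βs j) + ε ω)
    (R : EuclideanSpace ℝ (Fin d) → ℝ)
    (hR : ∀ β, R β = (1 / 2) * ∫ ω, ((∑ j, X ω j * β j) - y ω) ^ 2 ∂μ)
    (hmin : ∀ β, R βs ≤ R β)
    (g : Ω → Fin d → ℝ)
    (hg : ∀ ω, g ω =
      ((∑ j, (X ω j * (if δ ω j then 1 else 0)) * ((p j)⁻¹ * βs j)) - y ω) •
          (Matrix.diagonal fun j => (p j)⁻¹).mulVec (fun j => X ω j * (if δ ω j then 1 else 0)) -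
        ((1 - Matrix.diagonal p) * (Matrix.diagonal fun j => (p j)⁻¹) *
            (Matrix.diagonal fun j => (p j)⁻¹) *
            (Matrix.diagonal fun j => (X ω j * (if δ ω j then 1 else 0)) ^ 2)).mulVec
          (fun j => βs j)) :
    ∀ i, ∫ ω, g ω i ∂μ = 0 :=
  stmt_2_general d μ X ε δ hXm hεm hδm hεX hε0 hε2 p hp hδlaw hδindep hX2 βs y hy g hg
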